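/- arXiv:1701.01674 — 3 statements merged into one kernel-verified Lean document; each statement's English description precedes it below -/
import Mathlib

section
/- Let $s_1 \ge s_2 \ge \cdots \ge s_n \ge 0$ be real numbers with $n \ge 2$, such that $s_1 \ge \sqrt{n-1}$ and $s_i s_j \le 1$ for all $i \ne j$. Then $\prod_{i=1}^n (1+s_i^2) \le 1 + s_1^2 + 2n$. -/
/-! With `t = s₁²`, the pairing condition gives `sᵢ² ≤ 1/t` for `i ≥ 2`, so the product is at most
`(1 + t)(1 + 1/t)^m` with `m = n - 1`. By the geometric sum,
`(1 + t)((1 + 1/t)^m - 1) = ∑_{j<m} (1 + 1/t)^(j+1)`, which decreases in `t`; since `t ≥ m`, it is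
at most `(m + 1)((1 + 1/m)^m - 1) ≤ n (e - 1) ≤ 2n`. -/

open Finset

theorem prod_one_add_sq_le_of_mul_le_one {ι : Type*} [Fintype ι] [DecidableEq ι]
    (s : ι → ℝ) (i₀ : ι) (hs : ∀ i, 0 ≤ s i) (hi₀ : 0 < s i₀)
    (hpair : ∀ i, i ≠ i₀ → s i * s i₀ ≤ 1) :
    ∏ i, (1 + s i ^ 2) ≤ (1 + s i₀ ^ 2) * (1 + (s i₀ ^ 2)⁻¹) ^ (Fintype.card ι - 1) := by
  calc ∏ i, (1 + s i ^ 2) = (1 + s i₀ ^ 2) * ∏ i ∈ univ.erase i₀, (1 + s i ^ 2) :=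
        (mul_prod_erase _ _ (mem_univ i₀)).symm
    _ ≤ (1 + s i₀ ^ 2) * ∏ _i ∈ univ.erase i₀, (1 + (s i₀ ^ 2)⁻¹) := by
        gcongr with i hi
        rw [← one_div, le_div_iff₀ (by positivity), ← mul_pow]
        exact pow_le_one₀ (mul_nonneg (hs i) hi₀.le) (hpair i (ne_of_mem_erase hi))
    _ = (1 + s i₀ ^ 2) * (1 + (s i₀ ^ 2)⁻¹) ^ (Fintype.card ι - 1) := by
        rw [prod_const, card_erase_of_mem (mem_univ i₀), card_univ]

theorem one_add_mul_one_add_inv_pow_sub_one_eq_sum {t : ℝ} (ht : t ≠ 0) (m : ℕ) :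
    (1 + t) * ((1 + t⁻¹) ^ m - 1) = ∑ j ∈ range m, (1 + t⁻¹) ^ (j + 1) := by
  have hgeom := geom_sum_mul (1 + t⁻¹) m
  rw [add_sub_cancel_left] at hgeom
  have hrat : (1 + t) * t⁻¹ = 1 + t⁻¹ := by field_simp; ring
  rw [← hgeom, sum_mul, mul_sum]
  refine sum_congr rfl fun j _ => ?_
  rw [pow_succ, ← hrat]
  ring

theorem one_add_mul_one_add_inv_pow_sub_one_le_of_le {a t : ℝ} (ha : 0 < a) (hat : a ≤ t) (m : ℕ) :
    (1 + t) * ((1 + t⁻¹) ^ m - 1) ≤ (1 + a) * ((1 + a⁻¹) ^ m - 1) := by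
  have ht : 0 < t := ha.trans_le hat
  rw [one_add_mul_one_add_inv_pow_sub_one_eq_sum ht.ne',
    one_add_mul_one_add_inv_pow_sub_one_eq_sum ha.ne']
  gcongr

theorem one_add_nat_mul_one_add_inv_pow_sub_one_le (m : ℕ) :
    (1 + (m : ℝ)) * ((1 + (m : ℝ)⁻¹) ^ m - 1) ≤ 2 * (m + 1) := by
  have hexp := Real.one_add_inv_pow_le_exp (n := m)
  have he := Real.exp_one_lt_three
  nlinarith

/-- if `s 0 ≥ s 1 ≥ ⋯ ≥ s (n-1) ≥ 0` (`n ≥ 2`), `s 0 ≥ √(n-1)` and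
`s i * s j ≤ 1` for `i ≠ j`, then `∏ (1 + sᵢ²) ≤ 1 + s₀² + 2n`. -/
theorem stmt_0 (n : ℕ) (hn : 2 ≤ n) (s : Fin n → ℝ)
    (hnonneg : ∀ i, 0 ≤ s i)
    (h1 : Real.sqrt ((n : ℝ) - 1) ≤ s ⟨0, by omega⟩)
    (hpair : ∀ i j : Fin n, i ≠ j → s i * s j ≤ 1) :
    ∏ i, (1 + s i ^ 2) ≤ 1 + s ⟨0, by omega⟩ ^ 2 + 2 * n := by
  obtain ⟨m, rfl⟩ : ∃ m, n = m + 1 := ⟨n - 1, by omega⟩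
  have hm : (1 : ℝ) ≤ m := by exact_mod_cast (by omega : 1 ≤ m)
  push_cast at h1 ⊢
  rw [add_sub_cancel_right] at h1
  set s₀ := s ⟨0, by omega⟩
  have hs₀ : (m : ℝ) ≤ s₀ ^ 2 := (Real.sqrt_le_left (hnonneg _)).1 h1
  have hprod := prod_one_add_sq_le_of_mul_le_one s _ hnonneg
    (by nlinarith [hnonneg ⟨0, by omega⟩]) fun i hi => hpair i _ hi
  rw [Fintype.card_fin, Nat.add_sub_cancel] at hprod
  have hanti := one_add_mul_one_add_inv_pow_sub_one_le_of_le (by linarith) hs₀ m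
  have hexp := one_add_nat_mul_one_add_inv_pow_sub_one_le m
  linarith
end

section
/- Let $S = (S^\alpha_i)$ be an $n \times m$ real matrix ($n \ge 2$) with singular values $s_1 \ge \cdots \ge s_n \ge 0$. If $\prod_{i=1}^n (1+s_i^2) \le 9$, then $\det\left(\delta_{ij} + \sum_{\alpha=1}^m S^\alpha_i S^\alpha_j\right) \le 1 + \left(\sum_{\alpha=1}^m |S^\alpha|\right)^2$, where $|S^\alpha| = \left(\sum_{i=1}^n (S^\alpha_i)^2\right)^{1/2}$ is the norm of the $\alpha$-th column. -/
open Finset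

lemma key_prod {ι : Type*} [DecidableEq ι] (s : ι → ℝ) (hs : ∀ i, 0 ≤ s i) (t : Finset ι) :
    (∑ i ∈ t, s i) ^ 2 ≤ 8 → ∏ i ∈ t, (1 + s i ^ 2) ≤ 1 + (∑ i ∈ t, s i) ^ 2 := by
  induction t using Finset.induction_on with
  | empty => simp
  | insert _ _ ha ih =>
    rename_i a t
    intro h8
    rw [Finset.sum_insert ha] at h8
    rw [Finset.sum_insert ha, Finset.prod_insert ha]
    have hsum : (0:ℝ) ≤ ∑ i ∈ t, s i := Finset.sum_nonneg fun i _ => hs i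
    have hsa := hs a
    have h8' : (∑ i ∈ t, s i) ^ 2 ≤ 8 := by nlinarith
    have hP := ih h8'
    have hP0 : (0:ℝ) ≤ ∏ i ∈ t, (1 + s i ^ 2) :=
      Finset.prod_nonneg fun i _ => by nlinarith [sq_nonneg (s i)]
    have hx0 : (0:ℝ) ≤ s a * ∑ i ∈ t, s i := mul_nonneg hsa hsum
    have hx2 : s a * (∑ i ∈ t, s i) ≤ 2 := by nlinarith [sq_nonneg (s a - ∑ i ∈ t, s i)]
    have hkey : (1 + s a ^ 2) * ∏ i ∈ t, (1 + s i ^ 2) ≤ (1 + s a ^ 2) * (1 + (∑ i ∈ t, s i) ^ 2) :=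
      mul_le_mul_of_nonneg_left hP (by nlinarith [sq_nonneg (s a)])
    nlinarith [mul_nonneg hx0 (sub_nonneg.2 hx2)]

/-- Bessel-type inequality for a pairwise-orthogonal family with norms ≤ 1. -/
lemma bessel {n m : ℕ} (w : Fin n → Fin m → ℝ)
    (horth : ∀ i j, i ≠ j → ∑ α, w i α * w j α = 0)
    (hnorm : ∀ i, ∑ α, w i α * w i α ≤ 1) (β : Fin m) :
    ∑ i, w i β ^ 2 ≤ 1 := by
  set c : Fin n → ℝ := fun i => w i β with hc
  have h0 : (0:ℝ) ≤ ∑ α, ((if α = β then (1:ℝ) else 0) - ∑ i, c i * w i α) ^ 2 :=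
    Finset.sum_nonneg fun α _ => sq_nonneg _
  have hsplit : ∑ α, ((if α = β then (1:ℝ) else 0) - ∑ i, c i * w i α) ^ 2
      = ∑ α, (if α = β then (1:ℝ) else 0) ^ 2
        - 2 * ∑ α, (if α = β then (1:ℝ) else 0) * (∑ i, c i * w i α)
        + ∑ α, (∑ i, c i * w i α) ^ 2 := by
    rw [Finset.mul_sum, ← Finset.sum_sub_distrib, ← Finset.sum_add_distrib]
    exact Finset.sum_congr rfl fun α _ => by ring
  have h1 : ∑ α, ((if α = β then (1:ℝ) else 0)) ^ 2 = 1 := by simp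
  have h2 : ∑ α, (if α = β then (1:ℝ) else 0) * (∑ i, c i * w i α) = ∑ i, c i * w i β := by
    simp [ite_mul]
  have h3 : ∑ α, (∑ i, c i * w i α) ^ 2 = ∑ i, c i ^ 2 * ∑ α, w i α * w i α := by
    calc ∑ α, (∑ i, c i * w i α) ^ 2
        = ∑ α, ∑ i, ∑ j, (c i * w i α) * (c j * w j α) := by
          simp_rw [sq, Finset.sum_mul_sum]
      _ = ∑ i, ∑ j, (c i * c j) * ∑ α, w i α * w j α := by
          rw [Finset.sum_comm]
          refine Finset.sum_congr rfl fun i _ => ?_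
          rw [Finset.sum_comm]
          refine Finset.sum_congr rfl fun j _ => ?_
          rw [Finset.mul_sum]
          exact Finset.sum_congr rfl fun α _ => by ring
      _ = ∑ i, c i ^ 2 * ∑ α, w i α * w i α := by
          refine Finset.sum_congr rfl fun i _ => ?_
          rw [Finset.sum_eq_single i (fun j _ hj => by rw [horth i j (Ne.symm hj), mul_zero])
            (fun h => absurd (Finset.mem_univ i) h)]
          ring
  have h4 : ∑ i, c i ^ 2 * ∑ α, w i α * w i α ≤ ∑ i, c i ^ 2 := by
    refine Finset.sum_le_sum fun i _ => ?_
    calc c i ^ 2 * ∑ α, w i α * w i α ≤ c i ^ 2 * 1 := by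
          refine mul_le_mul_of_nonneg_left (hnorm i) (sq_nonneg _)
      _ = c i ^ 2 := mul_one _
  have h5 : ∑ i, c i * w i β = ∑ i, c i ^ 2 := by
    exact Finset.sum_congr rfl fun i _ => by rw [hc]; ring
  rw [hsplit, h1, h2, h5] at h0
  linarith

/-- nuclear norm bound: if the columns of `V` are orthogonal with `‖Vᶜᵢ‖² = lam i`,
then `∑ √(lam i) ≤ ∑ row norms of V`. -/
lemma nuclear {n m : ℕ} (V : Matrix (Fin m) (Fin n) ℝ) (lam : Fin n → ℝ)
    (hVV : ∀ i j, ∑ α, V α i * V α j = if i = j then lam i else 0) :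
    ∑ i, Real.sqrt (lam i) ≤ ∑ α, Real.sqrt (∑ i, V α i ^ 2) := by
  have hlam : ∀ i, 0 ≤ lam i := by
    intro i
    have h := hVV i i
    rw [if_pos rfl] at h
    rw [← h]
    exact Finset.sum_nonneg fun α _ => mul_self_nonneg _
  set w : Fin n → Fin m → ℝ :=
    fun i α => if lam i = 0 then 0 else V α i / Real.sqrt (lam i) with hw
  have horth : ∀ i j, i ≠ j → ∑ α, w i α * w j α = 0 := by
    intro i j hij
    by_cases hi : lam i = 0
    · simp [hw, hi]
    by_cases hj : lam j = 0
    · simp [hw, hj]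
    have : ∀ α, w i α * w j α = (V α i * V α j) / (Real.sqrt (lam i) * Real.sqrt (lam j)) := by
      intro α
      simp only [hw, if_neg hi, if_neg hj]
      rw [div_mul_div_comm]
    rw [Finset.sum_congr rfl fun α _ => this α, ← Finset.sum_div, hVV i j, if_neg hij, zero_div]
  have hnorm : ∀ i, ∑ α, w i α * w i α ≤ 1 := by
    intro i
    by_cases hi : lam i = 0
    · simp [hw, hi]
    have : ∀ α, w i α * w i α = (V α i * V α i) / (Real.sqrt (lam i) * Real.sqrt (lam i)) := by
      intro α
      simp only [hw, if_neg hi]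
      rw [div_mul_div_comm]
    rw [Finset.sum_congr rfl fun α _ => this α, ← Finset.sum_div, hVV i i, if_pos rfl,
      Real.mul_self_sqrt (hlam i), div_self hi]
  have hkey : ∀ i, Real.sqrt (lam i) = ∑ α, w i α * V α i := by
    intro i
    by_cases hi : lam i = 0
    · simp [hw, hi]
    have : ∀ α, w i α * V α i = (V α i * V α i) / Real.sqrt (lam i) := by
      intro α
      simp only [hw, if_neg hi]
      rw [div_mul_eq_mul_div, mul_comm]
    rw [Finset.sum_congr rfl fun α _ => this α, ← Finset.sum_div, hVV i i, if_pos rfl,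
      Real.div_sqrt]
  calc ∑ i, Real.sqrt (lam i) = ∑ i, ∑ α, w i α * V α i :=
        Finset.sum_congr rfl fun i _ => hkey i
    _ = ∑ α, ∑ i, w i α * V α i := Finset.sum_comm
    _ ≤ ∑ α, Real.sqrt (∑ i, w i α ^ 2) * Real.sqrt (∑ i, V α i ^ 2) :=
        Finset.sum_le_sum fun α _ => Real.sum_mul_le_sqrt_mul_sqrt _ _ _
    _ ≤ ∑ α, 1 * Real.sqrt (∑ i, V α i ^ 2) := by
        refine Finset.sum_le_sum fun α _ => ?_
        refine mul_le_mul_of_nonneg_right ?_ (Real.sqrt_nonneg _)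
        exact Real.sqrt_le_one.mpr (bessel w horth hnorm α)
    _ = ∑ α, Real.sqrt (∑ i, V α i ^ 2) := by simp

/-- Lemma 4.5: for an `n × m` matrix `S` (`n ≥ 2`) whose singular values
`s 0 ≥ ⋯ ≥ s (n-1) ≥ 0` satisfy `∏ (1 + sᵢ²) ≤ 9`, one has
`det (I + S Sᵀ) ≤ 1 + (∑_α ‖S^α‖)²`. -/
theorem stmt_2 (n m : ℕ) (hn : 2 ≤ n) (S : Matrix (Fin n) (Fin m) ℝ)
    (hA : (S * S.transpose).IsHermitian)
    (s : Fin n → ℝ) (hnonneg : ∀ i, 0 ≤ s i)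
    (hmono : ∀ i j : Fin n, i ≤ j → s j ≤ s i)
    (heig : ∃ σ : Equiv.Perm (Fin n), ∀ i, hA.eigenvalues (σ i) = s i ^ 2)
    (h9 : ∏ i, (1 + s i ^ 2) ≤ 9) :
    (1 + S * S.transpose).det ≤
      1 + (∑ α : Fin m, Real.sqrt (∑ i : Fin n, S i α ^ 2)) ^ 2 := by
  obtain ⟨σ, hσ⟩ := heig
  set lam := hA.eigenvalues with hlam
  set U : Matrix (Fin n) (Fin n) ℝ := (hA.eigenvectorUnitary : Matrix (Fin n) (Fin n) ℝ) with hU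
  have hst : star U = U.transpose := Matrix.conjTranspose_eq_transpose_of_trivial U
  have hUUt : U * U.transpose = 1 := by
    rw [← hst]; exact Matrix.mem_unitaryGroup_iff.mp hA.eigenvectorUnitary.2
  have hUtU : U.transpose * U = 1 := by
    rw [← hst]; exact Matrix.mem_unitaryGroup_iff'.mp hA.eigenvectorUnitary.2
  have hd1 : U.transpose * (S * S.transpose) * U = Matrix.diagonal lam := by
    have := hA.conjStarAlgAut_star_eigenvectorUnitary
    rw [Unitary.conjStarAlgAut_star_apply, hst] at this
    simpa using this
  -- determinant identity
  have hdet : (1 + S * S.transpose).det = ∏ i, (1 + lam i) := by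
    have h1 : (1 : Matrix (Fin n) (Fin n) ℝ) + S * S.transpose
        = U * (1 + Matrix.diagonal lam) * U.transpose := by
      rw [mul_add, mul_one, add_mul, hUUt]
      congr 1
      rw [← hd1]
      symm
      calc U * (U.transpose * (S * S.transpose) * U) * U.transpose
          = (U * U.transpose) * (S * S.transpose) * (U * U.transpose) := by noncomm_ring
        _ = S * S.transpose := by rw [hUUt, one_mul, mul_one]
    rw [h1, Matrix.det_mul_right_comm, hUUt, one_mul]
    rw [← Matrix.diagonal_one, Matrix.diagonal_add, Matrix.det_diagonal]
  -- the matrix V = Sᵀ U whose columns are orthogonal with norms² = lam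
  set V : Matrix (Fin m) (Fin n) ℝ := S.transpose * U with hV
  have hVtV : V.transpose * V = Matrix.diagonal lam := by
    rw [hV, Matrix.transpose_mul, Matrix.transpose_transpose, ← hd1]
    simp only [Matrix.mul_assoc]
  have hVVt_diag : ∀ α, ∑ i, V α i ^ 2 = ∑ i, S i α ^ 2 := by
    have h2 : V * V.transpose = S.transpose * S := by
      rw [hV, Matrix.transpose_mul, Matrix.transpose_transpose]
      calc S.transpose * U * (U.transpose * S)
          = S.transpose * (U * U.transpose) * S := by simp only [Matrix.mul_assoc]
        _ = S.transpose * S := by rw [hUUt, Matrix.mul_one]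
    intro α
    have h3 : (V * V.transpose) α α = (S.transpose * S) α α := by rw [h2]
    simpa [Matrix.mul_apply, Matrix.transpose_apply, sq] using h3
  have hVV : ∀ i j, ∑ α, V α i * V α j = if i = j then lam i else 0 := by
    intro i j
    have h3 : (V.transpose * V) i j = Matrix.diagonal lam i j := by rw [hVtV]
    simpa [Matrix.mul_apply, Matrix.transpose_apply, Matrix.diagonal_apply] using h3
  -- nuclear norm bound
  have hnuc : ∑ i, Real.sqrt (lam i) ≤ ∑ α, Real.sqrt (∑ i, S i α ^ 2) :=
    le_of_le_of_eq (nuclear V lam hVV)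
      (Finset.sum_congr rfl fun α _ => by rw [hVVt_diag α])
  have hsum_eq : ∑ i, s i = ∑ i, Real.sqrt (lam i) := by
    rw [← Equiv.sum_comp σ fun i => Real.sqrt (lam i)]
    exact (Finset.sum_congr rfl fun i _ => by rw [hσ i, Real.sqrt_sq (hnonneg i)]).symm
  have hprod_eq : ∏ i, (1 + lam i) = ∏ i, (1 + s i ^ 2) := by
    rw [← Equiv.prod_comp σ fun i => 1 + lam i]
    exact Finset.prod_congr rfl fun i _ => by rw [hσ i]
  set T := ∑ α, Real.sqrt (∑ i, S i α ^ 2) with hT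
  have hT0 : 0 ≤ T := Finset.sum_nonneg fun α _ => Real.sqrt_nonneg _
  have hs0 : 0 ≤ ∑ i, s i := Finset.sum_nonneg fun i _ => hnonneg i
  have hsT : ∑ i, s i ≤ T := hsum_eq ▸ hnuc
  rw [hdet, hprod_eq]
  by_cases h8 : 8 ≤ T ^ 2
  · linarith
  · push_neg at h8
    have h1 : (∑ i, s i) ^ 2 ≤ T ^ 2 := pow_le_pow_left₀ hs0 hsT 2
    have h2 := key_prod s hnonneg Finset.univ (by linarith)
    calc ∏ i, (1 + s i ^ 2) ≤ 1 + (∑ i, s i) ^ 2 := h2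
      _ ≤ 1 + T ^ 2 := by linarith
end

section
/- Let $u^1, \dots, u^m \in \mathbb{R}^n$ be vectors (the gradients $Du^\alpha$), let $K > 0$, and suppose $|u^1|^2 \cdot \sum_{\alpha=2}^m |u^\alpha|^2 \le K^2$ and $\sum_{\alpha=2}^m |u^\alpha|^2 \le K$. Let $\lambda_1 \ge \lambda_2 \ge \cdots \ge \lambda_n \ge 0$ be the singular values of the $n \times m$ matrix whose columns are $u^1, \dots, u^m$. Then $\lambda_i \lambda_j \le 2K$ for all $i \ne j$. -/
/-!
For nonnegative eigenvalues `μ` of `A`, any two of them satisfy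
`2 μₐ μ_b ≤ (∑ μ)² - ∑ μ² = (tr A)² - tr (A²)`. With `t = |u¹|²` and `S = ∑_{α ≥ 2} |u^α|²` we
have `tr A = t + S` and `tr (A²) = ∑_{α,β} ⟨u^α, u^β⟩² ≥ t²`, hence
`λᵢ² λⱼ² ≤ t S + S² / 2 ≤ 3K² / 2`.
-/

open Matrix Finset

theorem Matrix.IsHermitian.trace_mul_self_eq_sum_eigenvalues_sq {𝕜 n : Type*} [RCLike 𝕜]
    [Fintype n] [DecidableEq n] {A : Matrix n n 𝕜} (hA : A.IsHermitian) :
    (A * A).trace = ∑ i, (hA.eigenvalues i : 𝕜) ^ 2 := by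
  conv_lhs => rw [hA.spectral_theorem, ← map_mul, Unitary.conjStarAlgAut_apply, trace_mul_cycle,
    Unitary.coe_star_mul_self, one_mul, diagonal_mul_diagonal, trace_diagonal]
  simp [sq]

theorem Finset.two_mul_mul_le_sq_sum_sub_sum_sq {ι R : Type*} [CommRing R] [LinearOrder R]
    [IsStrictOrderedRing R] [DecidableEq ι] {s : Finset ι} {f : ι → R}
    (hf : ∀ i ∈ s, 0 ≤ f i) {a b : ι} (ha : a ∈ s) (hb : b ∈ s) (hab : a ≠ b) :
    2 * (f a * f b) ≤ (∑ i ∈ s, f i) ^ 2 - ∑ i ∈ s, f i ^ 2 := by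
  have hpair : {a, b} ⊆ s := insert_subset ha (singleton_subset_iff.mpr hb)
  have hsplit (g : ι → R) : ∑ i ∈ s, g i = g a + g b + ∑ i ∈ s \ {a, b}, g i := by
    rw [← sum_sdiff hpair, sum_pair hab, add_comm]
  have hrest : ∀ i ∈ s \ {a, b}, 0 ≤ f i := fun i hi => hf i (mem_sdiff.mp hi).1
  have hR := sum_nonneg hrest
  have hR2 := sum_sq_le_sq_sum_of_nonneg hrest
  rw [hsplit f, hsplit (f · ^ 2)]
  nlinarith [mul_nonneg (hf a ha) hR, mul_nonneg (hf b hb) hR]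

theorem Matrix.IsHermitian.two_mul_eigenvalues_mul_le {n : Type*} [Fintype n] [DecidableEq n]
    {A : Matrix n n ℝ} (hA : A.IsHermitian) (hnonneg : ∀ i, 0 ≤ hA.eigenvalues i) {a b : n}
    (hab : a ≠ b) :
    2 * (hA.eigenvalues a * hA.eigenvalues b) ≤ A.trace ^ 2 - (A * A).trace := by
  have hsum := hA.trace_eq_sum_eigenvalues
  have hsum_sq := hA.trace_mul_self_eq_sum_eigenvalues_sq
  simp only [RCLike.ofReal_real_eq_id, id] at hsum hsum_sq
  rw [hsum, hsum_sq]
  exact two_mul_mul_le_sq_sum_sub_sum_sq (fun i _ => hnonneg i) (mem_univ a) (mem_univ b) hab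

section Gram

variable {ι n R : Type*} [Fintype ι] [Fintype n] [CommSemiring R] (u : ι → n → R)

theorem Matrix.trace_sum_vecMulVec_self :
    (∑ α, vecMulVec (u α) (u α)).trace = ∑ α, u α ⬝ᵥ u α := by
  simp only [trace_sum, trace_vecMulVec]

theorem Matrix.trace_sum_vecMulVec_self_mul_self :
    ((∑ α, vecMulVec (u α) (u α)) * ∑ α, vecMulVec (u α) (u α)).trace =
      ∑ α, ∑ β, (u α ⬝ᵥ u β) ^ 2 := by
  simp only [sum_mul_sum, trace_sum, vecMulVec_mul_vecMulVec, trace_vecMulVec, dotProduct_smul,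
    smul_eq_mul, sq]

end Gram

theorem Matrix.sq_dotProduct_self_le_trace_sum_vecMulVec_self_mul_self {ι n R : Type*}
    [Fintype ι] [Fintype n] [CommRing R] [LinearOrder R] [IsStrictOrderedRing R]
    (u : ι → n → R) (z : ι) :
    (u z ⬝ᵥ u z) ^ 2 ≤ ((∑ α, vecMulVec (u α) (u α)) * ∑ α, vecMulVec (u α) (u α)).trace := by
  rw [trace_sum_vecMulVec_self_mul_self]
  calc (u z ⬝ᵥ u z) ^ 2 ≤ ∑ β, (u z ⬝ᵥ u β) ^ 2 :=
        single_le_sum (f := fun β => (u z ⬝ᵥ u β) ^ 2) (fun _ _ => sq_nonneg _) (mem_univ z)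
    _ ≤ ∑ α, ∑ β, (u α ⬝ᵥ u β) ^ 2 :=
        single_le_sum (f := fun α => ∑ β, (u α ⬝ᵥ u β) ^ 2)
          (fun _ _ => sum_nonneg fun _ _ => sq_nonneg _) (mem_univ z)

theorem stmt_4_general (n m : ℕ) (hm : 1 ≤ m) (K : ℝ)
    (u : Fin m → Fin n → ℝ)
    (h1 : (∑ i, u ⟨0, hm⟩ i ^ 2) *
        (∑ α ∈ Finset.univ.filter (fun α => α ≠ (⟨0, hm⟩ : Fin m)), ∑ i, u α i ^ 2) ≤ K ^ 2)
    (h2 : (∑ α ∈ Finset.univ.filter (fun α => α ≠ (⟨0, hm⟩ : Fin m)), ∑ i, u α i ^ 2) ≤ K)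
    (A : Matrix (Fin n) (Fin n) ℝ)
    (hAdef : A = ∑ α, Matrix.vecMulVec (u α) (u α))
    (hA : A.IsHermitian)
    (lam : Fin n → ℝ)
    (heig : ∃ σ : Equiv.Perm (Fin n), ∀ i, hA.eigenvalues (σ i) = lam i ^ 2) :
    ∀ i j : Fin n, i ≠ j → lam i * lam j ≤ 2 * K := by
  intro i j hij
  obtain ⟨σ, hσ⟩ := heig
  set z : Fin m := ⟨0, hm⟩
  set a₀ := ∑ i, u z i ^ 2
  set S := ∑ α ∈ univ.filter (fun α => α ≠ z), ∑ i, u α i ^ 2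
  have hnorm (α : Fin m) : u α ⬝ᵥ u α = ∑ i, u α i ^ 2 := by simp only [dotProduct, sq]
  have htrace : A.trace = a₀ + S := by
    rw [hAdef, trace_sum_vecMulVec_self, ← add_sum_erase _ _ (mem_univ z), ← filter_ne']
    simp only [hnorm, a₀, S]
  have htrace_sq : a₀ ^ 2 ≤ (A * A).trace := by
    simpa only [hnorm, ← hAdef] using sq_dotProduct_self_le_trace_sum_vecMulVec_self_mul_self u z
  have heig_nonneg (p : Fin n) : 0 ≤ hA.eigenvalues p := by
    rw [← σ.apply_symm_apply p, hσ]
    positivity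
  have hpair := hA.two_mul_eigenvalues_mul_le heig_nonneg (σ.injective.ne hij)
  rw [htrace, hσ, hσ] at hpair
  have hS : 0 ≤ S := sum_nonneg fun α _ => by positivity
  have hK : 0 ≤ K := hS.trans h2
  have hsq : (lam i * lam j) ^ 2 ≤ (2 * K) ^ 2 :=
    calc (lam i * lam j) ^ 2 ≤ a₀ * S + S ^ 2 / 2 := by linear_combination hpair / 2 + htrace_sq / 2
      _ ≤ K ^ 2 + K ^ 2 / 2 := by gcongr
      _ ≤ (2 * K) ^ 2 := by nlinarith
  exact (abs_le_of_sq_le_sq hsq (by positivity)).trans' (le_abs_self _)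

/-- Lemma 4.1: if `|u¹|² · ∑_{α≥2} |u^α|² ≤ K²` and `∑_{α≥2} |u^α|² ≤ K`,
then the singular values `λ` of the matrix with columns `u¹, …, u^m`
(square roots of the eigenvalues of `A = ∑_α u^α (u^α)ᵀ`) satisfy
`λ i * λ j ≤ 2K` for `i ≠ j`. -/
theorem stmt_4 (n m : ℕ) (hn : 2 ≤ n) (hm : 1 ≤ m) (K : ℝ) (hK : 0 < K)
    (u : Fin m → Fin n → ℝ)
    (h1 : (∑ i, u ⟨0, hm⟩ i ^ 2) *
        (∑ α ∈ Finset.univ.filter (fun α => α ≠ (⟨0, hm⟩ : Fin m)), ∑ i, u α i ^ 2) ≤ K ^ 2)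
    (h2 : (∑ α ∈ Finset.univ.filter (fun α => α ≠ (⟨0, hm⟩ : Fin m)), ∑ i, u α i ^ 2) ≤ K)
    (A : Matrix (Fin n) (Fin n) ℝ)
    (hAdef : A = ∑ α, Matrix.vecMulVec (u α) (u α))
    (hA : A.IsHermitian)
    (lam : Fin n → ℝ) (hlamnn : ∀ i, 0 ≤ lam i)
    (hmono : ∀ i j : Fin n, i ≤ j → lam j ≤ lam i)
    (heig : ∃ σ : Equiv.Perm (Fin n), ∀ i, hA.eigenvalues (σ i) = lam i ^ 2) :
    ∀ i j : Fin n, i ≠ j → lam i * lam j ≤ 2 * K :=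
  stmt_4_general n m hm K u h1 h2 A hAdef hA lam heig
end
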